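/- arXiv:1611.01780 — 2 statements merged into one kernel-verified Lean document; each statement's English description precedes it below -/
import Mathlib

section
/- Let M be a smooth real surface, X a complex manifold of complex dimension 3 with a holomorphic contact form given in local coordinates by α = dz + x dy, and F = (x, y, z) : M → X a smooth immersion with F*α = 0. Then at every point p ∈ M, the image dF_p(T_p M) of the tangent space under the differential is a complex line (a 1-dimensional complex subspace) of T_{F(p)} X. -/
/-- A smooth Legendrian immersion `F = (x,y,z)` of a real surface into `ℂ³` with the standard
contact form `α = dz + x dy` has complex tangent lines: at every point `p`, the image of the
differential `dF_p` is (the underlying real plane of) a 1-dimensional complex subspace of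
`T_{F(p)} ℂ³ = ℂ³`. -/
theorem legendrian_surface_is_complex_curve (x y z : ℝ × ℝ → ℂ)
    (hx : ContDiff ℝ (⊤ : ℕ∞) x) (hy : ContDiff ℝ (⊤ : ℕ∞) y) (hz : ContDiff ℝ (⊤ : ℕ∞) z)
    (F : ℝ × ℝ → ℂ × ℂ × ℂ) (hF : ∀ q, F q = (x q, y q, z q))
    (himm : ∀ q : ℝ × ℝ, Function.Injective (fderiv ℝ F q))
    (hleg : ∀ (q : ℝ × ℝ) (v : ℝ × ℝ), fderiv ℝ z q v + x q * fderiv ℝ y q v = 0)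
    (p : ℝ × ℝ) :
    ∃ w : ℂ × ℂ × ℂ, w ≠ 0 ∧
      Set.range (fderiv ℝ F p) = (Submodule.span ℂ {w} : Submodule ℂ (ℂ × ℂ × ℂ)) := by
  -- differentiability facts
  have hxd : Differentiable ℝ x := hx.differentiable (by simp)
  have hyd : Differentiable ℝ y := hy.differentiable (by simp)
  have hzd : Differentiable ℝ z := hz.differentiable (by simp)
  have hyd' : Differentiable ℝ (fderiv ℝ y) :=
    (hy.fderiv_right (m := (⊤ : ℕ∞)) (by simp)).differentiable (by simp)
  -- the differential of F is the product of the differentials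
  have hFdef : F = fun q => (x q, y q, z q) := funext hF
  have hFd : ∀ v, fderiv ℝ F p v = (fderiv ℝ x p v, fderiv ℝ y p v, fderiv ℝ z p v) := by
    intro v
    have : HasFDerivAt F ((fderiv ℝ x p).prod ((fderiv ℝ y p).prod (fderiv ℝ z p))) p := by
      rw [hFdef]
      exact HasFDerivAt.prodMk (hxd p).hasFDerivAt (HasFDerivAt.prodMk ((hyd p).hasFDerivAt) (hzd p).hasFDerivAt)
    rw [this.fderiv]
    rfl
  -- the Legendrian condition as an equality of derivatives
  have hzy : ∀ q v, fderiv ℝ z q v = -(x q) * fderiv ℝ y q v := by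
    intro q v
    have := hleg q v
    linear_combination this
  have hz_eq : fderiv ℝ z = fun q => (-(x q)) • fderiv ℝ y q := by
    funext q
    exact ContinuousLinearMap.ext fun v => by
      simpa [smul_eq_mul] using hzy q v
  -- second derivatives
  set Y : (ℝ × ℝ) →L[ℝ] (ℝ × ℝ) →L[ℝ] ℂ := fderiv ℝ (fderiv ℝ y) p with hY
  have hYfd : HasFDerivAt (fderiv ℝ y) Y p := (hyd' p).hasFDerivAt
  have hYsymm : ∀ v w, Y v w = Y w v :=
    second_derivative_symmetric (fun q => (hyd q).hasFDerivAt) hYfd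
  have hcfd : HasFDerivAt (fun q => -(x q)) (-(fderiv ℝ x p)) p := HasFDerivAt.neg (hxd p).hasFDerivAt
  have hZfd : HasFDerivAt (fderiv ℝ z)
      ((-(x p)) • Y + (-(fderiv ℝ x p)).smulRight (fderiv ℝ y p)) p := by
    rw [hz_eq]
    exact hcfd.smul hYfd
  have hZsymm := second_derivative_symmetric (f := z) (fun q => (hzd q).hasFDerivAt) hZfd
  -- notation for first derivatives at p
  set a := fderiv ℝ x p (1, 0) with ha
  set b := fderiv ℝ y p (1, 0) with hb
  set c := fderiv ℝ x p (0, 1) with hc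
  set d := fderiv ℝ y p (0, 1) with hd
  -- the key determinant identity a*d = c*b
  have hdet : a * d = c * b := by
    have h1 := hZsymm (1, 0) (0, 1)
    have h2 := hYsymm (1, 0) (0, 1)
    simp only [ContinuousLinearMap.add_apply, ContinuousLinearMap.smul_apply,
      ContinuousLinearMap.smulRight_apply, ContinuousLinearMap.neg_apply, smul_eq_mul] at h1
    rw [h2] at h1
    linear_combination -h1
  -- the two tangent vectors
  set L := fderiv ℝ F p with hL
  set u₁ : ℂ × ℂ × ℂ := (a, b, -(x p) * b) with hu₁
  set u₂ : ℂ × ℂ × ℂ := (c, d, -(x p) * d) with hu₂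
  have hLe₁ : L (1, 0) = u₁ := by rw [hFd, hzy]
  have hLe₂ : L (0, 1) = u₂ := by rw [hFd, hzy]
  have hLsr : ∀ s r : ℝ, L (s, r) = s • u₁ + r • u₂ := by
    intro s r
    have : (s, r) = s • ((1 : ℝ), (0 : ℝ)) + r • ((0 : ℝ), (1 : ℝ)) := by simp
    rw [this, map_add, map_smul, map_smul, hLe₁, hLe₂]
  -- u₁ ≠ 0
  have hu₁ne : u₁ ≠ 0 := by
    intro h
    have : L (1, 0) = L 0 := by rw [hLe₁, h, map_zero]
    have := himm p this
    simpa using congrArg Prod.fst this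
  have hab : ¬(a = 0 ∧ b = 0) := by
    rintro ⟨h1, h2⟩
    exact hu₁ne (by simp [hu₁, h1, h2])
  -- u₂ is a complex multiple of u₁
  obtain ⟨μ, hμc, hμd⟩ : ∃ μ : ℂ, c = μ * a ∧ d = μ * b := by
    by_cases hA : a = 0
    · have hB : b ≠ 0 := fun hB => hab ⟨hA, hB⟩
      refine ⟨d / b, ?_, by field_simp⟩
      have : c * b = 0 := by rw [← hdet, hA]; ring
      rcases mul_eq_zero.mp this with h | h
      · rw [h, hA]; ring
      · exact absurd h hB
    · refine ⟨c / a, by field_simp, ?_⟩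
      field_simp
      linear_combination hdet
  have hu₂μ : u₂ = μ • u₁ := by
    simp only [hu₁, hu₂, Prod.smul_mk, smul_eq_mul]
    refine Prod.ext (by rw [hμc]) (Prod.ext (by rw [hμd]) ?_)
    simp only [hμd]; ring
  -- μ is not real (else L would not be injective)
  have hμim : μ.im ≠ 0 := by
    intro h0
    have hμre : μ = (μ.re : ℂ) := by
      apply Complex.ext <;> simp [h0]
    have : L (0, 1) = L (μ.re, 0) := by
      rw [hLe₂, hLsr, hu₂μ, hμre]
      simp [Complex.coe_smul]
    have := himm p this
    simpa using congrArg Prod.snd this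
  refine ⟨u₁, hu₁ne, ?_⟩
  ext v
  simp only [SetLike.mem_coe, Submodule.mem_span_singleton]
  constructor
  · rintro ⟨q, rfl⟩
    obtain ⟨s, r⟩ := q
    refine ⟨(s : ℂ) + (r : ℂ) * μ, ?_⟩
    rw [hLsr, hu₂μ, add_smul, mul_smul, Complex.coe_smul, Complex.coe_smul]
  · rintro ⟨t, rfl⟩
    set r : ℝ := t.im / μ.im with hr
    set s : ℝ := t.re - r * μ.re with hs
    refine ⟨(s, r), ?_⟩
    have ht : (s : ℂ) + (r : ℂ) * μ = t := by
      apply Complex.ext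
      · simp [hs, Complex.add_im, Complex.mul_re]
      · simp [hr, Complex.add_im, Complex.mul_im]
        field_simp
    rw [hLsr, hu₂μ, ← Complex.coe_smul, ← Complex.coe_smul, ← mul_smul, ← add_smul, ht]
end

section
/- Let P be a compact topological space, and suppose ξ : P × [0,1] → C^{2n} is continuous with continuous derivative ∂ξ/∂s, and ∂ξ/∂s(p,s) ≠ 0 for all (p,s) ∈ P × [0,1]. Then there exist finitely many compact sets U_1, …, U_m covering P, compact sets V_j with U_j ⊆ int V_j, pairwise disjoint closed subintervals I_1, …, I_m of [0,1], and indices k(1), …, k(m) ∈ {1, …, 2n} such that the k(j)-th coordinate of ∂ξ/∂s(p,s) is nonzero for all s ∈ I_j and p ∈ V_j. -/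
/-!
Clamping `s` to `[0, 1]` makes each `‖ξ'_k‖` continuous on `P × ℝ`. Every `p` has a
coordinate `k` with `ξ'_k(p, 0) ≠ 0`, and two applications of the tube lemma (along `[0, 1]`
and along the compact `P`) give one `r ∈ (0, 1]` such that every `p` has a `k` with
`‖ξ'_k‖ > r` on `{p} × [0, r]`. So one pair per coordinate suffices: `U_k` (resp. `V_k`) is
the set of `p` with `‖ξ'_k‖ ≥ r` (resp. `≥ r / 2`) on `{p} × [0, r]`; both are closed, hence
compact, and `U_k ⊆ int V_k` by the tube lemma once more. The intervals are `2n` disjoint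
pieces of `[0, r]`.
-/

open Set Filter Topology Function

section

variable {X Y : Type*} [TopologicalSpace X] [TopologicalSpace Y]

theorem ContinuousOn.continuous_comp_projIcc_snd {α : Type*} [LinearOrder α]
    [TopologicalSpace α] [OrderTopology α] {f : X × α → Y} {a b : α} (h : a ≤ b)
    (hf : ContinuousOn f {q | q.2 ∈ Icc a b}) :
    Continuous fun z : X × α => f (z.1, projIcc a b h z.2) :=
  hf.comp_continuous (continuous_fst.prodMk (continuous_subtype_val.comp
    (continuous_projIcc.comp continuous_snd))) fun z => (projIcc a b h z.2).2

variable {F : X × Y → ℝ} {K : Set Y}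

theorem isOpen_setOf_forall_mem_lt (hF : Continuous F) (hK : IsCompact K) (a : ℝ) :
    IsOpen {x | ∀ y ∈ K, a < F (x, y)} :=
  isOpen_iff_mem_nhds.2 fun _ hx => hK.eventually_forall_of_forall_eventually fun y hy =>
    hF.continuousAt.eventually_const_lt (hx y hy)

theorem isClosed_setOf_forall_mem_le (hF : Continuous F) (K : Set Y) (a : ℝ) :
    IsClosed {x | ∀ y ∈ K, a ≤ F (x, y)} := by
  simp only [ofPred_forall]
  exact isClosed_biInter fun y _ => isClosed_le continuous_const (by fun_prop)

theorem setOf_forall_mem_le_subset_interior (hF : Continuous F) (hK : IsCompact K) {a b : ℝ}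
    (hab : a < b) : {x | ∀ y ∈ K, b ≤ F (x, y)} ⊆ interior {x | ∀ y ∈ K, a ≤ F (x, y)} :=
  fun _ hx => interior_maximal (fun _ hx' y hy => (hx' y hy).le)
    (isOpen_setOf_forall_mem_lt hF hK a) fun y hy => hab.trans_le (hx y hy)

end

theorem eventually_forall_exists_forall_Icc_lt {X ι : Type*} [TopologicalSpace X]
    [CompactSpace X] {F : ι → X × ℝ → ℝ} (hF : ∀ i, Continuous (F i))
    (h0 : ∀ x, ∃ i, 0 < F i (x, 0)) :
    ∀ᶠ r in 𝓝[>] 0, ∀ x, ∃ i, ∀ s ∈ Icc 0 r, r < F i (x, s) := by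
  -- substituting `s = r * t` with `t ∈ [0, 1]` makes the condition open in `(r, x)`
  set A : ι → Set (ℝ × X) := fun i => {z | ∀ t ∈ Icc (0 : ℝ) 1, 0 < F i (z.2, z.1 * t) - z.1}
  have hopen : ∀ i, IsOpen (A i) := fun i =>
    isOpen_setOf_forall_mem_lt (F := fun q : (ℝ × X) × ℝ => F i (q.1.2, q.1.1 * q.2) - q.1.1)
      (by fun_prop) isCompact_Icc 0
  have hsmall : ∀ᶠ r in 𝓝 0, ∀ x ∈ (univ : Set X), ∃ i,
      ∀ t ∈ Icc (0 : ℝ) 1, 0 < F i (x, r * t) - r :=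
    isCompact_univ.eventually_forall_of_forall_eventually fun x _ => by
      obtain ⟨i, hi⟩ := h0 x
      have hx : ((0 : ℝ), x) ∈ A i := fun t _ => by simpa using hi
      exact mem_of_superset ((hopen i).mem_nhds hx) fun z hz => ⟨i, hz⟩
  filter_upwards [nhdsWithin_le_nhds hsmall, self_mem_nhdsWithin] with r hr (hr0 : 0 < r) x
  obtain ⟨i, hi⟩ := hr x (mem_univ x)
  refine ⟨i, fun s hs => ?_⟩
  have hst := hi (s / r) ⟨div_nonneg hs.1 hr0.le, div_le_one_of_le₀ hs.2 hr0.le⟩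
  rwa [mul_div_cancel₀ _ hr0.ne', sub_pos] at hst

theorem exists_pairwise_disjoint_Icc_subset_Icc (m : ℕ) {c : ℝ} (hc : 0 < c) :
    ∃ a b : Fin m → ℝ, (∀ j, a j < b j ∧ Icc (a j) (b j) ⊆ Icc 0 c) ∧
      Pairwise (Disjoint on fun j => Icc (a j) (b j)) := by
  set h := c / (m + 1)
  have hh : 0 < h := by positivity
  have hmh : (m + 1) * h = c := mul_div_cancel₀ c (by positivity)
  have hsub : ∀ j : Fin m,
      Icc (j * h) (j * h + h / 2) ⊆ Ico ((j : ℤ) • h) (((j : ℤ) + 1) • h) := by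
    intro j
    simp only [zsmul_eq_mul, Int.cast_add, Int.cast_natCast, Int.cast_one]
    exact Icc_subset_Ico_right (by linarith)
  refine ⟨fun j => j * h, fun j => j * h + h / 2, fun j => ⟨by linarith, ?_⟩,
    fun i j hij => ?_⟩
  · have hj : (j : ℝ) + 1 ≤ m := by exact_mod_cast j.isLt
    exact Icc_subset_Icc (by positivity) (by nlinarith)
  · have hij' : (i : ℤ) ≠ j := by simpa [Fin.ext_iff] using hij
    exact (pairwise_disjoint_Ico_zsmul h hij').mono (hsub i) (hsub j)

theorem covering_nonvanishing_coordinate_general (n : ℕ) (P : Type) [TopologicalSpace P]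
    [CompactSpace P] (ξ' : P × ℝ → Fin (2 * n) → ℂ)
    (hcont' : ContinuousOn ξ' {q : P × ℝ | q.2 ∈ Icc (0:ℝ) 1})
    (hne : ∀ (p : P), ∀ s ∈ Icc (0:ℝ) 1, ξ' (p, s) ≠ 0) :
    ∃ (m : ℕ) (U V : Fin m → Set P) (a b : Fin m → ℝ) (k : Fin m → Fin (2 * n)),
      (∀ j, IsCompact (U j)) ∧ (⋃ j, U j) = univ ∧
      (∀ j, IsCompact (V j) ∧ U j ⊆ interior (V j)) ∧
      (∀ j, a j ≤ b j ∧ Icc (a j) (b j) ⊆ Icc (0:ℝ) 1) ∧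
      (∀ i j, i ≠ j → Disjoint (Icc (a i) (b i)) (Icc (a j) (b j))) ∧
      (∀ j, ∀ p ∈ V j, ∀ s ∈ Icc (a j) (b j), ξ' (p, s) (k j) ≠ 0) := by
  set F : Fin (2 * n) → P × ℝ → ℝ := fun k z =>
    ‖ξ' (z.1, projIcc 0 1 zero_le_one z.2) k‖
  have hF : ∀ k, Continuous (F k) := fun k =>
    ((continuous_apply k).comp (hcont'.continuous_comp_projIcc_snd zero_le_one)).norm
  have hF_eq : ∀ k p, ∀ s ∈ Icc (0 : ℝ) 1, F k (p, s) = ‖ξ' (p, s) k‖ := fun k p s hs => by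
    simp only [F, projIcc_of_mem _ hs]
  have h0 : (0 : ℝ) ∈ Icc 0 1 := left_mem_Icc.2 zero_le_one
  have hF0 : ∀ p, ∃ k, 0 < F k (p, 0) := fun p => by
    obtain ⟨k, hk⟩ := Function.ne_iff.1 (hne p 0 h0)
    exact ⟨k, by rw [hF_eq k p 0 h0]; exact norm_pos_iff.2 hk⟩
  obtain ⟨r, hr, hr0, hr1⟩ :=
    ((eventually_forall_exists_forall_Icc_lt hF hF0).and (Ioc_mem_nhdsGT one_pos)).exists
  obtain ⟨a, b, hab, hdisj⟩ := exists_pairwise_disjoint_Icc_subset_Icc (2 * n) hr0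
  have hsub : ∀ k, Icc (a k) (b k) ⊆ Icc 0 1 := fun k =>
    (hab k).2.trans (Icc_subset_Icc le_rfl hr1)
  refine ⟨2 * n, fun k => {p | ∀ s ∈ Icc 0 r, r ≤ F k (p, s)},
    fun k => {p | ∀ s ∈ Icc 0 r, r / 2 ≤ F k (p, s)}, a, b, id,
    fun k => (isClosed_setOf_forall_mem_le (hF k) _ _).isCompact, ?_,
    fun k => ⟨(isClosed_setOf_forall_mem_le (hF k) _ _).isCompact,
      setOf_forall_mem_le_subset_interior (hF k) isCompact_Icc (half_lt_self hr0)⟩,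
    fun k => ⟨(hab k).1.le, hsub k⟩, hdisj, fun k p hp s hs => ?_⟩
  · exact eq_univ_of_forall fun p =>
      let ⟨k, hk⟩ := hr p
      mem_iUnion.2 ⟨k, fun s hs => (hk s hs).le⟩
  · have hpos := (half_pos hr0).trans_le (hp s ((hab k).2 hs))
    rw [hF_eq k p s (hsub k hs)] at hpos
    exact norm_pos_iff.1 hpos

/-- Compactness covering argument: if `ξ : P × [0,1] → ℂ^{2n}` is a continuous family of paths
with continuous, nowhere vanishing derivative `∂ξ/∂s`, then there are finitely many compact
sets `U_1, …, U_m` covering `P`, compact sets `V_j` with `U_j ⊆ int V_j`, pairwise disjoint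
closed subintervals `I_1, …, I_m ⊆ [0,1]` and coordinate indices `k(j)` such that the `k(j)`-th
coordinate of `∂ξ/∂s` is nonzero on `V_j × I_j`. -/
theorem covering_nonvanishing_coordinate (n : ℕ) (P : Type) [TopologicalSpace P]
    [CompactSpace P] (ξ ξ' : P × ℝ → Fin (2 * n) → ℂ)
    (hcont : Continuous ξ)
    (hderiv : ∀ (p : P), ∀ s ∈ Icc (0:ℝ) 1, HasDerivAt (fun t => ξ (p, t)) (ξ' (p, s)) s)
    (hcont' : ContinuousOn ξ' {q : P × ℝ | q.2 ∈ Icc (0:ℝ) 1})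
    (hne : ∀ (p : P), ∀ s ∈ Icc (0:ℝ) 1, ξ' (p, s) ≠ 0) :
    ∃ (m : ℕ) (U V : Fin m → Set P) (a b : Fin m → ℝ) (k : Fin m → Fin (2 * n)),
      (∀ j, IsCompact (U j)) ∧ (⋃ j, U j) = univ ∧
      (∀ j, IsCompact (V j) ∧ U j ⊆ interior (V j)) ∧
      (∀ j, a j ≤ b j ∧ Icc (a j) (b j) ⊆ Icc (0:ℝ) 1) ∧
      (∀ i j, i ≠ j → Disjoint (Icc (a i) (b i)) (Icc (a j) (b j))) ∧
      (∀ j, ∀ p ∈ V j, ∀ s ∈ Icc (a j) (b j), ξ' (p, s) (k j) ≠ 0) :=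
  covering_nonvanishing_coordinate_general n P ξ' hcont' hne
end
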